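/- arXiv:1902.00080 — 3 statements merged into one kernel-verified Lean document; each statement's English description precedes it below -/
import Mathlib

section
/- For every d ≥ 4 there exist d×d stochastic matrices M and M' such that ρ([M,M']_√) = 1 (equivalently, the Kazakos pseudo-distance d_kaz(M,M') = 1 − ρ([M,M']_√) vanishes) while max_{i∈[d]} ∑_{j∈[d]} |M(i,j) − M'(i,j)| = 1; in particular M ≠ M'. -/
open Finset

noncomputable section

/-- A row-stochastic matrix. -/
def IsStochastic {d : ℕ} (M : Matrix (Fin d) (Fin d) ℝ) : Prop :=
  (∀ i j, 0 ≤ M i j) ∧ ∀ i, ∑ j, M i j = 1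

/-- Spectral radius of a real square matrix: the largest absolute value of a
(complex) eigenvalue, i.e. of a root of the characteristic polynomial over `ℂ`. -/
def specRad {d : ℕ} (A : Matrix (Fin d) (Fin d) ℝ) : ℝ :=
  sSup {r : ℝ | ∃ μ : ℂ, ((A.map (Complex.ofReal)).charpoly).IsRoot μ ∧ r = ‖μ‖}

/-! The identity matrix with its row `0` replaced by the uniform distribution on `{0, 1}`, resp.
on `{1, 2}`, gives two stochastic matrices whose rows `0` are at `ℓ₁` distance `1`. Their
geometric mean is the identity with row `0` replaced by `e₁ / 2`; it is upper triangular with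
diagonal `(0, 1, …, 1)`, so its spectral radius is `1`. -/

open Matrix

/-- The geometric-mean matrix `[M, M']_√`. -/
def geomMean {d : ℕ} (M M' : Matrix (Fin d) (Fin d) ℝ) : Matrix (Fin d) (Fin d) ℝ :=
  Matrix.of fun i j => √(M i j * M' i j)

theorem specRad_eq_iSup_abs_diag {d : ℕ} {A : Matrix (Fin d) (Fin d) ℝ}
    (hA : A.IsUpperTriangular) : specRad A = ⨆ i, |A i i| := by
  have hAC : (A.map Complex.ofReal).IsUpperTriangular := fun i j hij => by simp [hA hij]
  rw [specRad, charpoly_of_isUpperTriangular _ hAC, iSup]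
  congr 1
  ext r
  simp only [Set.mem_ofPred_eq, Set.mem_range, Polynomial.IsRoot.def, Polynomial.eval_prod,
    Polynomial.eval_sub, Polynomial.eval_X, Polynomial.eval_C, prod_eq_zero_iff, mem_univ,
    true_and, sub_eq_zero, map_apply]
  constructor
  · rintro ⟨μ, ⟨i, rfl⟩, rfl⟩
    exact ⟨i, by simp⟩
  · rintro ⟨i, rfl⟩
    exact ⟨A i i, ⟨i, rfl⟩, by simp⟩

section IdentityWithOneRowReplaced

variable {d : ℕ} {r : Fin d}

theorem isStochastic_updateRow_one {p : Fin d → ℝ} (hp_nonneg : ∀ j, 0 ≤ p j)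
    (hp_sum : ∑ j, p j = 1) : IsStochastic (updateRow 1 r p) := by
  refine ⟨fun i j => ?_, fun i => ?_⟩
  · by_cases hi : i = r
    · simp [hi, hp_nonneg]
    · simp [updateRow_ne hi, one_apply, apply_ite]
  · by_cases hi : i = r
    · simp [hi, hp_sum]
    · simp [updateRow_ne hi, one_apply]

theorem geomMean_updateRow_one (p q : Fin d → ℝ) :
    geomMean (updateRow 1 r p) (updateRow 1 r q) = updateRow 1 r fun j => √(p j * q j) := by
  ext i j
  by_cases hi : i = r
  · simp [geomMean, hi]
  · rcases eq_or_ne i j with rfl | hij <;> simp [geomMean, one_apply_ne, *]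

theorem isUpperTriangular_updateRow_one {v : Fin d → ℝ} (hv : ∀ j < r, v j = 0) :
    (updateRow 1 r v).IsUpperTriangular := by
  intro i j hji
  by_cases hi : i = r
  · subst hi
    simpa using hv j hji
  · rw [updateRow_ne hi]
    exact one_apply_ne (ne_of_gt hji)

theorem specRad_updateRow_one {v : Fin d → ℝ} (hv : ∀ j < r, v j = 0) (hvr : |v r| ≤ 1)
    {i₀ : Fin d} (hi₀ : i₀ ≠ r) : specRad (updateRow 1 r v) = 1 := by
  rw [specRad_eq_iSup_abs_diag (isUpperTriangular_updateRow_one hv)]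
  have hdiag : ∀ i, |updateRow (1 : Matrix (Fin d) (Fin d) ℝ) r v i i|
      = if i = r then |v r| else 1 := by
    intro i
    by_cases hi : i = r <;> simp [hi]
  simp only [hdiag]
  have : Nonempty (Fin d) := ⟨r⟩
  refine le_antisymm (ciSup_le fun i => ?_) ?_
  · split_ifs <;> simp [hvr]
  · exact le_ciSup_of_le (Finite.bddAbove_range _) i₀ (by simp [hi₀])

theorem iSup_sum_abs_sub_updateRow_one (p q : Fin d → ℝ) :
    (⨆ i, ∑ j, |updateRow (1 : Matrix (Fin d) (Fin d) ℝ) r p i j - updateRow 1 r q i j|)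
      = ∑ j, |p j - q j| := by
  have hrow : ∀ i, ∑ j, |updateRow (1 : Matrix (Fin d) (Fin d) ℝ) r p i j - updateRow 1 r q i j|
      = if i = r then ∑ j, |p j - q j| else 0 := by
    intro i
    by_cases hi : i = r <;> simp [hi]
  simp only [hrow]
  have : Nonempty (Fin d) := ⟨r⟩
  have hnonneg : 0 ≤ ∑ j, |p j - q j| := sum_nonneg fun j _ => abs_nonneg _
  refine le_antisymm (ciSup_le fun i => ?_) ?_
  · split_ifs <;> simp [hnonneg]
  · exact le_ciSup_of_le (Finite.bddAbove_range _) r (by simp)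

end IdentityWithOneRowReplaced

section HalfPair

variable {ι : Type*} [DecidableEq ι]

def halfPair (a b : ι) : ι → ℝ :=
  Pi.single a (1 / 2) + Pi.single b (1 / 2)

theorem halfPair_nonneg (a b j : ι) : 0 ≤ halfPair a b j := by
  simp only [halfPair, Pi.add_apply, Pi.single_apply]
  split_ifs <;> norm_num

theorem sum_halfPair [Fintype ι] (a b : ι) : ∑ j, halfPair a b j = 1 := by
  simp only [halfPair, Pi.add_apply, sum_add_distrib, sum_pi_single', mem_univ, if_true]
  norm_num

theorem sqrt_halfPair_mul_halfPair {a b c : ι} (hab : a ≠ b) (hbc : b ≠ c) (hac : a ≠ c)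
    (j : ι) : √(halfPair a b j * halfPair b c j) = (Pi.single b (1 / 2) : ι → ℝ) j := by
  by_cases hja : j = a
  · subst hja; simp [halfPair, hab, hac]
  by_cases hjb : j = b
  · subst hjb; simp [halfPair, hab.symm, hbc]
  simp [halfPair, hja, hjb]

theorem sum_abs_halfPair_sub_halfPair [Fintype ι] {a c : ι} (hac : a ≠ c) (b : ι) :
    ∑ j, |halfPair a b j - halfPair b c j| = 1 := by
  have hdiff : halfPair a b - halfPair b c = Pi.single a (1 / 2) - Pi.single c (1 / 2) := by
    simp only [halfPair]; abel
  simp only [← Pi.sub_apply, hdiff]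
  rw [sum_eq_add_of_mem a c (mem_univ _) (mem_univ _) hac fun j _ hj => by simp [hj.1, hj.2]]
  simp [hac, hac.symm]
  norm_num

end HalfPair

/-- For every `d ≥ 4` there are stochastic matrices at Kazakos pseudo-distance `0`
(spectral radius of the geometric-mean matrix equal to `1`) whose max-row `ℓ₁`
distance equals `1`; in particular they are distinct. -/
theorem kazakos_vanishes_but_tv_positive (d : ℕ) (hd : 4 ≤ d) :
    ∃ M M' : Matrix (Fin d) (Fin d) ℝ,
      IsStochastic M ∧ IsStochastic M' ∧
      specRad (Matrix.of fun i j => Real.sqrt (M i j * M' i j)) = 1 ∧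
      (⨆ i, ∑ j, |M i j - M' i j|) = 1 ∧ M ≠ M' := by
  set a : Fin d := ⟨0, by omega⟩
  set b : Fin d := ⟨1, by omega⟩
  set c : Fin d := ⟨2, by omega⟩
  have hab : a ≠ b := by simp [a, b, Fin.ext_iff]
  have hbc : b ≠ c := by simp [b, c, Fin.ext_iff]
  have hac : a ≠ c := by simp [a, c, Fin.ext_iff]
  have hdist : (⨆ i, ∑ j, |updateRow (1 : Matrix (Fin d) (Fin d) ℝ) a (halfPair a b) i j
      - updateRow 1 a (halfPair b c) i j|) = 1 := by
    rw [iSup_sum_abs_sub_updateRow_one, sum_abs_halfPair_sub_halfPair hac]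
  refine ⟨updateRow 1 a (halfPair a b), updateRow 1 a (halfPair b c),
    isStochastic_updateRow_one (halfPair_nonneg a b) (sum_halfPair a b),
    isStochastic_updateRow_one (halfPair_nonneg b c) (sum_halfPair b c), ?_, hdist, ?_⟩
  · change specRad (geomMean _ _) = 1
    rw [geomMean_updateRow_one]
    simp only [sqrt_halfPair_mul_halfPair hab hbc hac]
    exact specRad_updateRow_one (fun j hj => Pi.single_eq_of_ne (by grind) _) (by simp [hab])
      hab.symm
  · intro hM
    simp [hM] at hdist

end
end

section
/- Let 0 < p < 1, let n ≥ 1, and let R₁,…,R_n be independent geometric random variables with success probability p supported on {1,2,3,…} (P(R = t) = (1−p)^{t−1} p). Then for every m < n/(2p): P( R₁ + ⋯ + R_n > m ) ≥ 1 − 1/(1 + n/4) ≥ 1/5. -/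
/-!
`S = R₁ + ⋯ + Rₙ` has mean `μ = n/p` and variance `σ² = n(1-p)/p²`, and `m` lies at least
`a = n/(2p)` below the mean. Cantelli's one-sided Chebyshev inequality, i.e. the bound
`𝟙[S ≤ μ - a] ≤ ((μ + σ²/a - S) / (a + σ²/a))²`, gives
`P(S ≤ m) ≤ σ² / (σ² + a²) = 4(1-p) / (4(1-p) + n) ≤ 4 / (n + 4)`.
The law of `S` is given by finite sums over the box `{1,…,m}ⁿ`; these sums of the nonnegative
quadratic `(c - S)²` are bounded by the full second moment `σ² + (c - μ)²`, by induction on `n`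
from an exact formula for the truncated one-dimensional sums.
-/

open Finset

noncomputable section

/-- `P(R₁ + ⋯ + Rₙ > m)` where `R₁,…,Rₙ` are i.i.d. geometric random variables with
success probability `p`, supported on `{1,2,3,…}` with `P(R = t) = (1-p)^{t-1} p`. -/
def geomTail (p : ℝ) (n m : ℕ) : ℝ :=
  1 - ∑ r ∈ (Fintype.piFinset fun _ : Fin n => Finset.Icc 1 m).filter
        (fun r => ∑ i, r i ≤ m),
      ∏ i, (1 - p) ^ (r i - 1) * p

theorem cantelli_sum_filter_le {ι : Type*} (s : Finset ι) (P : ι → Prop) [DecidablePred P]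
    (w X : ι → ℝ) {μ v a : ℝ} (hw : ∀ r ∈ s, 0 ≤ w r) (hv : 0 ≤ v) (ha : 0 < a)
    (hmom : ∀ c, ∑ r ∈ s, w r * (c - X r) ^ 2 ≤ v + (c - μ) ^ 2)
    (hP : ∀ r ∈ s, P r → X r ≤ μ - a) :
    ∑ r ∈ s.filter P, w r ≤ v / (v + a ^ 2) := by
  set b := a + v / a
  have hb : 0 < b := by positivity
  have hweight : ∀ r ∈ s.filter P, w r ≤ w r * (μ + v / a - X r) ^ 2 / b ^ 2 := by
    intro r hr
    obtain ⟨hrs, hPr⟩ := mem_filter.mp hr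
    have hXr : b ≤ μ + v / a - X r := by linarith [hP r hrs hPr]
    rw [le_div_iff₀ (by positivity)]
    exact mul_le_mul_of_nonneg_left (pow_le_pow_left₀ hb.le hXr 2) (hw r hrs)
  calc ∑ r ∈ s.filter P, w r
      ≤ ∑ r ∈ s.filter P, w r * (μ + v / a - X r) ^ 2 / b ^ 2 := sum_le_sum hweight
    _ ≤ ∑ r ∈ s, w r * (μ + v / a - X r) ^ 2 / b ^ 2 :=
        sum_le_sum_of_subset_of_nonneg (filter_subset _ _)
          fun r hr _ => div_nonneg (mul_nonneg (hw r hr) (sq_nonneg _)) (sq_nonneg b)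
    _ = (∑ r ∈ s, w r * (μ + v / a - X r) ^ 2) / b ^ 2 := (sum_div ..).symm
    _ ≤ (v + (v / a) ^ 2) / b ^ 2 := by
        gcongr
        simpa using hmom (μ + v / a)
    _ = v / (v + a ^ 2) := by
        simp only [b]
        field_simp
        ring

theorem Fintype.sum_piFinset_const_succ {α M : Type*} [AddCommMonoid M] (s : Finset α) (n : ℕ)
    (f : (Fin (n + 1) → α) → M) :
    ∑ r ∈ Fintype.piFinset (fun _ : Fin (n + 1) => s), f r =
      ∑ t ∈ s, ∑ r ∈ Fintype.piFinset (fun _ : Fin n => s), f (Fin.cons t r) := by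
  have h := filter_piFinset_eq_map_consEquiv (fun _ : Fin (n + 1) => s) (fun _ => True)
  simp only [filter_true] at h
  rw [h, sum_map, sum_product]
  rfl

/-- By memorylessness, the part of `E[A + (d - R)²]` beyond `M` is `(1-p)^M E[A + (d - M - R)²]`. -/
theorem sum_Icc_geom_mul_sq_eq (p A d : ℝ) (hp : p ≠ 0) (M : ℕ) :
    ∑ t ∈ Icc 1 M, (1 - p) ^ (t - 1) * p * (A + (d - t) ^ 2) =
      (A + (1 - p) / p ^ 2 + (d - 1 / p) ^ 2)
        - (1 - p) ^ M * (A + (1 - p) / p ^ 2 + (d - M - 1 / p) ^ 2) := by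
  induction M with
  | zero => simp
  | succ M ih =>
    rw [sum_Icc_succ_top (by omega), ih, Nat.add_sub_cancel]
    push_cast
    field_simp
    ring

theorem sum_Icc_geom_mul_sq_le {p A : ℝ} (hp0 : 0 < p) (hp1 : p ≤ 1) (hA : 0 ≤ A) (d : ℝ)
    (M : ℕ) :
    ∑ t ∈ Icc 1 M, (1 - p) ^ (t - 1) * p * (A + (d - t) ^ 2) ≤
      A + (1 - p) / p ^ 2 + (d - 1 / p) ^ 2 := by
  have hq : 0 ≤ 1 - p := sub_nonneg.mpr hp1
  rw [sum_Icc_geom_mul_sq_eq p A d hp0.ne' M]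
  refine sub_le_self _ (mul_nonneg (pow_nonneg hq M) ?_)
  have := div_nonneg hq (sq_nonneg p)
  positivity

theorem sum_piFinset_geom_mul_sq_le {p : ℝ} (hp0 : 0 < p) (hp1 : p ≤ 1) (n M : ℕ) (c : ℝ) :
    ∑ r ∈ Fintype.piFinset (fun _ : Fin n => Icc 1 M),
        (∏ i, (1 - p) ^ (r i - 1) * p) * (c - ∑ i, (r i : ℝ)) ^ 2 ≤
      n * (1 - p) / p ^ 2 + (c - n / p) ^ 2 := by
  induction n generalizing c with
  | zero => simp
  | succ n ih =>
    rw [Fintype.sum_piFinset_const_succ]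
    simp only [Fin.prod_univ_succ, Fin.sum_univ_succ, Fin.cons_zero, Fin.cons_succ]
    calc ∑ t ∈ Icc 1 M, ∑ r ∈ Fintype.piFinset (fun _ : Fin n => Icc 1 M),
          (1 - p) ^ (t - 1) * p * (∏ i, (1 - p) ^ (r i - 1) * p) *
            (c - ((t : ℝ) + ∑ i, (r i : ℝ))) ^ 2
        = ∑ t ∈ Icc 1 M, (1 - p) ^ (t - 1) * p *
            ∑ r ∈ Fintype.piFinset (fun _ : Fin n => Icc 1 M),
              (∏ i, (1 - p) ^ (r i - 1) * p) * (c - t - ∑ i, (r i : ℝ)) ^ 2 := by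
          simp only [mul_sum, mul_assoc, sub_add_eq_sub_sub]
      _ ≤ ∑ t ∈ Icc 1 M, (1 - p) ^ (t - 1) * p *
            (n * (1 - p) / p ^ 2 + (c - n / p - t) ^ 2) := by
          gcongr with t
          exact (ih (c - t)).trans_eq (by ring)
      _ ≤ n * (1 - p) / p ^ 2 + (1 - p) / p ^ 2 + (c - n / p - 1 / p) ^ 2 :=
          sum_Icc_geom_mul_sq_le hp0 hp1 (by have := sub_nonneg.mpr hp1; positivity) _ M
      _ = (n + 1 : ℕ) * (1 - p) / p ^ 2 + (c - (n + 1 : ℕ) / p) ^ 2 := by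
          push_cast
          ring

/-- Paley–Zygmund-type anti-concentration: if `m < n/(2p)` then the sum of `n`
i.i.d. `Geometric(p)` variables exceeds `m` with probability at least
`1 − 1/(1 + n/4) ≥ 1/5`. -/
theorem geometric_sum_anticoncentration
    (p : ℝ) (hp0 : 0 < p) (hp1 : p < 1) (n m : ℕ) (hn : 1 ≤ n)
    (hm : (m : ℝ) < (n : ℝ) / (2 * p)) :
    1 - 1 / (1 + (n : ℝ) / 4) ≤ geomTail p n m ∧
      (1 : ℝ) / 5 ≤ 1 - 1 / (1 + (n : ℝ) / 4) := by
  have hn' : (1 : ℝ) ≤ n := by exact_mod_cast hn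
  have hq : 0 ≤ 1 - p := by linarith
  refine ⟨?_, ?_⟩
  · have hcantelli := cantelli_sum_filter_le (Fintype.piFinset fun _ : Fin n => Icc 1 m)
      (fun r => ∑ i, r i ≤ m) (fun r => ∏ i, (1 - p) ^ (r i - 1) * p)
      (fun r => ∑ i, (r i : ℝ)) (μ := n / p) (v := n * (1 - p) / p ^ 2) (a := n / (2 * p))
      (fun r _ => prod_nonneg fun i _ => mul_nonneg (pow_nonneg hq _) hp0.le)
      (by positivity) (by positivity) (sum_piFinset_geom_mul_sq_le hp0 hp1.le n m)
      (fun r _ hr => by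
        have hsum : (∑ i, (r i : ℝ)) ≤ m := by exact_mod_cast hr
        have hgap : (n : ℝ) / p - n / (2 * p) = n / (2 * p) := by field_simp; ring
        linarith)
    have hratio : n * (1 - p) / p ^ 2 / (n * (1 - p) / p ^ 2 + (n / (2 * p)) ^ 2) ≤
        1 / (1 + (n : ℝ) / 4) := by
      rw [div_le_div_iff₀ (by positivity) (by positivity)]
      field_simp
      nlinarith
    unfold geomTail
    linarith
  · have hfrac : 1 / (1 + (n : ℝ) / 4) ≤ 4 / 5 := by
      rw [div_le_div_iff₀ (by positivity) (by norm_num)]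
      linarith
    linarith

end
end

section
/- Fix d ≥ 2, 0 < p⋆ ≤ 1/(2(d+1)), and η ∈ Δ_d. Define π on [d+1] by π(i) = (p(i) + p⋆·η(i))/(1 + p⋆) for i ∈ [d] and π(d+1) = p⋆/(1 + p⋆). Then π is a probability distribution satisfying π·M_η = π (i.e., π is stationary for M_η), and moreover min_{j∈[d+1]} π(j) = π(d+1). -/
/-!
From every state other than `a = d+1` the chain `M_η` jumps with the law `p`, and from `a` with
the law `q = (η, 0)`. Hence `v M_η = (1 - v a) p + v a q` for every distribution `v`, and since
`q a = 0` a fixed point has `v a = p a / (1 + p a)`, which forces `π = (p + p a q) / (1 + p a)`.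
The minimum sits at `a` because `p⋆ ≤ (1 - p⋆) / d`, i.e. `p⋆ (d + 1) ≤ 1`.
-/

open Finset

noncomputable section

/-- A probability distribution on `Fin d`. -/
def IsDist {d : ℕ} (μ : Fin d → ℝ) : Prop :=
  (∀ i, 0 ≤ μ i) ∧ ∑ i, μ i = 1

/-- Probability of a length-`m` trajectory under the Markov chain `(M, μ)`:
`μ(x₁) ∏_{t=1}^{m-1} M(x_t, x_{t+1})`. -/
def trajP {d m : ℕ} (M : Matrix (Fin d) (Fin d) ℝ) (μ : Fin d → ℝ)
    (x : Fin m → Fin d) : ℝ :=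
  (if h : 0 < m then μ (x ⟨0, h⟩) else 1) *
    ∏ t : Fin (m - 1),
      M (x ⟨t.1, by have h2 := t.2; omega⟩) (x ⟨t.1 + 1, by have h2 := t.2; omega⟩)


/-- The distribution `p` on `[d+1]`: `p(d+1) = p⋆`, `p(i) = (1-p⋆)/d` for `i ∈ [d]`. -/
def pInit (d : ℕ) (ps : ℝ) : Fin (d + 1) → ℝ :=
  fun i => if i.1 = d then ps else (1 - ps) / d

/-- The chain `M_η ∈ G_{p⋆}`: rows `1,…,d` equal `p`, row `d+1` is `(η(1),…,η(d),0)`. -/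
def MG (d : ℕ) (ps : ℝ) (η : Fin d → ℝ) : Matrix (Fin (d + 1)) (Fin (d + 1)) ℝ :=
  Matrix.of fun i j =>
    if i.1 = d then (if h : j.1 = d then 0 else η ⟨j.1, by have h2 := j.2; omega⟩)
    else pInit d ps j

/-- Number of visits to state `d+1` in a trajectory. -/
def Nlast (d m : ℕ) (x : Fin m → Fin (d + 1)) : ℕ :=
  (Finset.univ.filter (fun t => (x t).1 = d)).card

open Matrix

section TwoRowChain

variable {K ι : Type*}

theorem vecMul_eq_of_row_eq_of_ne [CommRing K] [Fintype ι] [DecidableEq ι] {M : Matrix ι ι K}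
    {p : ι → K} {a : ι} (hM : ∀ i ≠ a, M i = p) (v : ι → K) :
    v ᵥ* M = (∑ i, v i - v a) • p + v a • M a := by
  ext j
  have hrest : ∑ i ∈ univ.erase a, v i * M i j = (∑ i ∈ univ.erase a, v i) * p j := by
    rw [sum_mul]; exact sum_congr rfl fun i hi => by rw [hM i (ne_of_mem_erase hi)]
  simp only [vecMul, dotProduct, Pi.add_apply, Pi.smul_apply, smul_eq_mul]
  rw [← add_sum_erase _ _ (mem_univ a), hrest, sum_erase_eq_sub (mem_univ a)]
  ring

/-- The stationary law of the chain that jumps with law `p` from every state but `a`, and with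
law `q` from `a`. -/
def twoRowStationary [Field K] (p q : ι → K) (a : ι) : ι → K :=
  (1 + p a)⁻¹ • (p + p a • q)

section Field

variable [Field K] {p q : ι → K} {a : ι}

theorem twoRowStationary_apply (j : ι) :
    twoRowStationary p q a j = (p j + p a * q j) / (1 + p a) := by
  simp only [twoRowStationary, Pi.smul_apply, Pi.add_apply, smul_eq_mul]
  ring

theorem twoRowStationary_self (hqa : q a = 0) :
    twoRowStationary p q a a = p a / (1 + p a) := by
  rw [twoRowStationary_apply, hqa, mul_zero, add_zero]

theorem sum_twoRowStationary [Fintype ι] (hp : ∑ i, p i = 1) (hq : ∑ i, q i = 1)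
    (ha : 1 + p a ≠ 0) :
    ∑ i, twoRowStationary p q a i = 1 := by
  simp only [twoRowStationary_apply, ← sum_div, sum_add_distrib, ← mul_sum, hp, hq, mul_one]
  exact div_self ha

theorem vecMul_twoRowStationary [Fintype ι] [DecidableEq ι] {M : Matrix ι ι K}
    (hM : ∀ i ≠ a, M i = p) (hMa : M a = q) (hp : ∑ i, p i = 1) (hq : ∑ i, q i = 1)
    (hqa : q a = 0) (ha : 1 + p a ≠ 0) :
    twoRowStationary p q a ᵥ* M = twoRowStationary p q a := by
  rw [vecMul_eq_of_row_eq_of_ne hM, sum_twoRowStationary hp hq ha, twoRowStationary_self hqa, hMa]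
  ext j
  rw [twoRowStationary_apply]
  simp only [Pi.add_apply, Pi.smul_apply, smul_eq_mul]
  field_simp
  ring

end Field

section Order

variable [Field K] [LinearOrder K] [IsStrictOrderedRing K] {p q : ι → K} {a : ι}

theorem twoRowStationary_nonneg (hp : ∀ i, 0 ≤ p i) (hq : ∀ i, 0 ≤ q i) (j : ι) :
    0 ≤ twoRowStationary p q a j := by
  rw [twoRowStationary_apply]
  exact div_nonneg (add_nonneg (hp j) (mul_nonneg (hp a) (hq j))) (by linarith [hp a])

theorem twoRowStationary_self_le (hpa : 0 ≤ p a) (hpmin : ∀ i, p a ≤ p i)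
    (hq : ∀ i, 0 ≤ q i) (hqa : q a = 0) (j : ι) :
    twoRowStationary p q a a ≤ twoRowStationary p q a j := by
  rw [twoRowStationary_self hqa, twoRowStationary_apply]
  gcongr
  linarith [hpmin j, mul_nonneg hpa (hq j)]

end Order

end TwoRowChain

section ChainG

variable {d : ℕ} {ps : ℝ}

theorem pInit_last : pInit d ps (Fin.last d) = ps := if_pos rfl

theorem pInit_castSucc (i : Fin d) : pInit d ps i.castSucc = (1 - ps) / d :=
  if_neg i.isLt.ne

theorem sum_pInit (hd : d ≠ 0) : ∑ i, pInit d ps i = 1 := by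
  simp only [Fin.sum_univ_castSucc, pInit_castSucc, pInit_last, sum_const, card_univ,
    Fintype.card_fin, nsmul_eq_mul]
  field_simp
  ring

theorem pInit_last_le (hd : d ≠ 0) (h : ps * (d + 1) ≤ 1) (j : Fin (d + 1)) :
    ps ≤ pInit d ps j := by
  induction j using Fin.lastCases with
  | last => rw [pInit_last]
  | cast i =>
    rw [pInit_castSucc, le_div_iff₀ (by positivity)]
    linarith

theorem MG_of_ne_last {η : Fin d → ℝ} {i : Fin (d + 1)} (hi : i ≠ Fin.last d) :
    MG d ps η i = pInit d ps := by
  ext j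
  exact if_neg fun h => hi (Fin.ext h)

theorem MG_last_last {η : Fin d → ℝ} : MG d ps η (Fin.last d) (Fin.last d) = 0 := by
  simp [MG]

theorem MG_last_castSucc {η : Fin d → ℝ} (i : Fin d) :
    MG d ps η (Fin.last d) i.castSucc = η i := by
  simp [MG, i.isLt.ne]

theorem sum_MG_last {η : Fin d → ℝ} (hη : ∑ i, η i = 1) :
    ∑ j, MG d ps η (Fin.last d) j = 1 := by
  simp only [Fin.sum_univ_castSucc, MG_last_castSucc, MG_last_last, add_zero, hη]

theorem MG_last_nonneg {η : Fin d → ℝ} (hη : ∀ i, 0 ≤ η i) (j : Fin (d + 1)) :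
    0 ≤ MG d ps η (Fin.last d) j := by
  induction j using Fin.lastCases with
  | last => rw [MG_last_last]
  | cast i => rw [MG_last_castSucc]; exact hη i

end ChainG

/-- The stationary distribution of `M_η ∈ G_{p⋆}`:
`π(i) = (p(i) + p⋆ η(i))/(1 + p⋆)` for `i ∈ [d]` and `π(d+1) = p⋆/(1 + p⋆)`;
it is a probability distribution, satisfies `π M_η = π`, and attains its minimum
at state `d+1`. -/
theorem stationary_distribution_of_G
    (d : ℕ) (hd : 2 ≤ d) (ps : ℝ) (hps : 0 < ps) (hps2 : ps ≤ 1 / (2 * ((d : ℝ) + 1)))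
    (η : Fin d → ℝ) (hη : IsDist η)
    (π : Fin (d + 1) → ℝ)
    (hπ : ∀ i : Fin (d + 1),
      π i = if h : i.1 = d then ps / (1 + ps)
            else (pInit d ps i + ps * η ⟨i.1, by have h2 := i.2; omega⟩) / (1 + ps)) :
    IsDist π ∧ (∀ j, ∑ i, π i * MG d ps η i j = π j) ∧
      ∀ j, π ⟨d, Nat.lt_succ_self d⟩ ≤ π j := by
  obtain ⟨hη0, hη1⟩ := hη
  have hd0 : d ≠ 0 := by omega
  have hsmall : ps * (d + 1) ≤ 1 := by
    rw [le_div_iff₀ (by positivity)] at hps2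
    linarith
  have hπ_eq : π = twoRowStationary (pInit d ps) (MG d ps η (Fin.last d)) (Fin.last d) := by
    funext i
    rw [hπ i, twoRowStationary_apply, pInit_last]
    induction i using Fin.lastCases with
    | last => simp [MG_last_last, pInit_last]
    | cast i => simp [i.isLt.ne, MG_last_castSucc]
  have hpmin : ∀ j, pInit d ps (Fin.last d) ≤ pInit d ps j := fun j =>
    pInit_last.trans_le (pInit_last_le hd0 hsmall j)
  have hpInit_nonneg : ∀ j, 0 ≤ pInit d ps j := fun j =>
    hps.le.trans (pInit_last_le hd0 hsmall j)
  have hone : (1 : ℝ) + pInit d ps (Fin.last d) ≠ 0 := by rw [pInit_last]; positivity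
  subst hπ_eq
  exact ⟨⟨twoRowStationary_nonneg hpInit_nonneg (MG_last_nonneg hη0),
      sum_twoRowStationary (sum_pInit hd0) (sum_MG_last hη1) hone⟩,
    congrFun (vecMul_twoRowStationary (fun i hi => MG_of_ne_last hi) rfl (sum_pInit hd0)
      (sum_MG_last hη1) MG_last_last hone),
    twoRowStationary_self_le (hpInit_nonneg _) hpmin (MG_last_nonneg hη0) MG_last_last⟩

end
end
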